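/- arXiv:2401.09751 — 4 statements merged into one kernel-verified Lean document; each statement's English description precedes it below -/
import Mathlib

section
/- Initial functors and discrete opfibrations form an orthogonal factorization system on Cat: every functor factors as an initial functor followed by a discrete opfibration, uniquely up to unique isomorphism, and initial functors are left orthogonal to discrete opfibrations. -/
/-!
The middle category of the factorization of `F : A ⥤ B` is the category of elements of
`b ↦ π₀ (F / b)`. A comma category of the first factor over `(b, x)` is covered by the connected
component `x` of `F / b`, which makes the first factor initial, and a category of elements
always projects to its base by a discrete opfibration.

For orthogonality, a diagonal filler is forced to send `c` to the endpoint of the lift, starting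
at `u a`, of `v` applied to an arrow `i a ⟶ c`: the lift is unique, and connectedness of `i / c`
makes its endpoint independent of the arrow. Discrete opfibrations are faithful, so the
morphism part and all functor equations can be checked after applying `p`. Uniqueness of the
factorization up to unique isomorphism follows formally from unique diagonal fillers.
-/

open CategoryTheory

universe u

/-- `p = (e', fb)` is a lift of `f : π.obj e ⟶ y` with domain `e`. -/
def Lifts {E X : Type*} [Category E] [Category X]
    (π : E ⥤ X) (e : E) {y : X} (f : π.obj e ⟶ y) (p : Σ e' : E, e ⟶ e') : Prop :=
  ∃ h : π.obj p.1 = y, π.map p.2 ≫ eqToHom h = f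

/-- A functor is a discrete opfibration if every morphism out of the image of an object
has a unique lift with prescribed domain. -/
def IsDiscreteOpfibration {E X : Type*} [Category E] [Category X] (π : E ⥤ X) : Prop :=
  ∀ (e : E) (y : X) (f : π.obj e ⟶ y), ∃! p : Σ e' : E, e ⟶ e', Lifts π e f p

namespace CategoryTheory

theorem Functor.map_map_eq_of_comp_eq {A C B D : Type*} [Category A] [Category C] [Category B]
    [Category D] {F : A ⥤ C} {G : C ⥤ D} {F' : A ⥤ B} {G' : B ⥤ D} (h : F ⋙ G = F' ⋙ G')
    {a a' : A} (f : a ⟶ a') :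
    G.map (F.map f) = eqToHom (Functor.congr_obj h a) ≫ G'.map (F'.map f) ≫
      eqToHom (Functor.congr_obj h a').symm :=
  Functor.congr_hom h f

theorem Functor.ext_of_comp_faithful {A E B : Type*} [Category A] [Category E] [Category B]
    {F G : A ⥤ E} (p : E ⥤ B) [p.Faithful] (hobj : ∀ a, F.obj a = G.obj a)
    (h : F ⋙ p = G ⋙ p) : F = G :=
  Functor.ext hobj fun _ _ f =>
    p.map_injective (by simp [eqToHom_map, Functor.map_map_eq_of_comp_eq h f])

theorem isConnected_of_surjective_obj {J K : Type*} [Category J] [Category K]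
    [IsConnected J] (G : J ⥤ K) (hG : Function.Surjective G.obj) : IsConnected K := by
  have : Nonempty K := ⟨G.obj (Classical.arbitrary J)⟩
  refine zigzag_isConnected fun k k' => ?_
  obtain ⟨j, rfl⟩ := hG k
  obtain ⟨j', rfl⟩ := hG k'
  exact zigzag_obj_of_zigzag G (isPreconnected_zigzag j j')

end CategoryTheory

namespace IsDiscreteOpfibration

section Lifts

variable {E X : Type*} [Category E] [Category X] {π : E ⥤ X}

theorem sigma_eq_of_map_eq (hπ : IsDiscreteOpfibration π) {e x x' : E} (g : e ⟶ x)
    (g' : e ⟶ x') (hx : π.obj x = π.obj x') (hg : π.map g ≫ eqToHom hx = π.map g') :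
    (⟨x, g⟩ : Σ e', e ⟶ e') = ⟨x', g'⟩ :=
  (hπ e _ (π.map g')).unique ⟨hx, hg⟩ ⟨rfl, by simp⟩

theorem eq_of_map_eq (hπ : IsDiscreteOpfibration π) {e x x' : E} (g : e ⟶ x) (g' : e ⟶ x')
    (hx : π.obj x = π.obj x') (hg : π.map g ≫ eqToHom hx = π.map g') : x = x' :=
  congrArg Sigma.fst (hπ.sigma_eq_of_map_eq g g' hx hg)

theorem faithful (hπ : IsDiscreteOpfibration π) : π.Faithful where
  map_injective {_ _} g g' hg := by
    simpa using hπ.sigma_eq_of_map_eq g g' rfl (by simpa using hg)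

noncomputable def liftObj (hπ : IsDiscreteOpfibration π) (e : E) {y : X} (f : π.obj e ⟶ y) :
    E :=
  (hπ e y f).exists.choose.1

noncomputable def liftHom (hπ : IsDiscreteOpfibration π) (e : E) {y : X} (f : π.obj e ⟶ y) :
    e ⟶ hπ.liftObj e f :=
  (hπ e y f).exists.choose.2

theorem obj_liftObj (hπ : IsDiscreteOpfibration π) (e : E) {y : X} (f : π.obj e ⟶ y) :
    π.obj (hπ.liftObj e f) = y :=
  (hπ e y f).exists.choose_spec.1

theorem map_liftHom_comp_eqToHom (hπ : IsDiscreteOpfibration π) (e : E) {y : X}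
    (f : π.obj e ⟶ y) : π.map (hπ.liftHom e f) ≫ eqToHom (hπ.obj_liftObj e f) = f :=
  (hπ e y f).exists.choose_spec.2

@[simp]
theorem map_liftHom (hπ : IsDiscreteOpfibration π) (e : E) {y : X} (f : π.obj e ⟶ y) :
    π.map (hπ.liftHom e f) = f ≫ eqToHom (hπ.obj_liftObj e f).symm :=
  (comp_eqToHom_iff _ _ _).mp (hπ.map_liftHom_comp_eqToHom e f)

theorem liftObj_eq (hπ : IsDiscreteOpfibration π) {e x : E} {y : X} (f : π.obj e ⟶ y)
    (g : e ⟶ x) (hx : π.obj x = y) (hg : π.map g ≫ eqToHom hx = f) : hπ.liftObj e f = x :=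
  hπ.eq_of_map_eq (hπ.liftHom e f) g (by rw [obj_liftObj, hx]) (by
    rw [← eqToHom_trans (hπ.obj_liftObj e f) hx.symm, ← Category.assoc,
      map_liftHom_comp_eqToHom, ← hg, Category.assoc, eqToHom_trans, eqToHom_refl,
      Category.comp_id])

end Lifts

section Filler

variable {A C E B : Type*} [Category A] [Category C] [Category E] [Category B]
  {i : A ⥤ C} {p : E ⥤ B} {u : A ⥤ E} {v : C ⥤ B}

theorem functor_ext (hp : IsDiscreteOpfibration p)
    (hi : ∀ c, Nonempty (CostructuredArrow i c)) {d d' : C ⥤ E} (h₁ : i ⋙ d = i ⋙ d')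
    (h₂ : d ⋙ p = d' ⋙ p) : d = d' := by
  have := hp.faithful
  refine Functor.ext_of_comp_faithful p (fun c => ?_) h₂
  obtain ⟨o⟩ := hi c
  exact hp.eq_of_map_eq (d.map o.hom) (eqToHom (Functor.congr_obj h₁ o.left) ≫ d'.map o.hom)
    (Functor.congr_obj h₂ c) (by simp [eqToHom_map, Functor.map_map_eq_of_comp_eq h₂ o.hom])

noncomputable abbrev fillerObjAt (hp : IsDiscreteOpfibration p) (hsq : i ⋙ v = u ⋙ p) {c : C}
    (o : CostructuredArrow i c) : E :=
  hp.liftObj (u.obj o.left) (eqToHom (Functor.congr_obj hsq o.left).symm ≫ v.map o.hom)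

theorem fillerObjAt_eq_of_hom (hp : IsDiscreteOpfibration p) (hsq : i ⋙ v = u ⋙ p) {c : C}
    {o o' : CostructuredArrow i c} (m : o ⟶ o') :
    fillerObjAt hp hsq o = fillerObjAt hp hsq o' :=
  hp.liftObj_eq _ (u.map m.left ≫ hp.liftHom _ _) (hp.obj_liftObj _ _)
    (by simp [Functor.map_map_eq_of_comp_eq hsq.symm m.left, ← v.map_comp_assoc,
      CostructuredArrow.w m])

variable [i.Initial]

noncomputable def fillerObj (hp : IsDiscreteOpfibration p) (hsq : i ⋙ v = u ⋙ p) (c : C) : E :=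
  fillerObjAt hp hsq (Classical.arbitrary (CostructuredArrow i c))

theorem fillerObj_eq_fillerObjAt (hp : IsDiscreteOpfibration p) (hsq : i ⋙ v = u ⋙ p) {c : C}
    (o : CostructuredArrow i c) : fillerObj hp hsq c = fillerObjAt hp hsq o :=
  constant_of_preserves_morphisms (fillerObjAt hp hsq)
    (fun _ _ m => fillerObjAt_eq_of_hom hp hsq m) _ o

theorem fillerObj_eq (hp : IsDiscreteOpfibration p) (hsq : i ⋙ v = u ⋙ p) {c : C}
    (o : CostructuredArrow i c) {x : E} (g : u.obj o.left ⟶ x) (hx : p.obj x = v.obj c)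
    (hg : p.map g ≫ eqToHom hx = eqToHom (Functor.congr_obj hsq o.left).symm ≫ v.map o.hom) :
    fillerObj hp hsq c = x :=
  (fillerObj_eq_fillerObjAt hp hsq o).trans (hp.liftObj_eq _ g hx hg)

theorem obj_fillerObj (hp : IsDiscreteOpfibration p) (hsq : i ⋙ v = u ⋙ p) (c : C) :
    p.obj (fillerObj hp hsq c) = v.obj c :=
  hp.obj_liftObj _ _

theorem liftObj_fillerObj (hp : IsDiscreteOpfibration p) (hsq : i ⋙ v = u ⋙ p) {c c' : C}
    (h : c ⟶ c') :
    hp.liftObj (fillerObj hp hsq c) (eqToHom (obj_fillerObj hp hsq c) ≫ v.map h) =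
      fillerObj hp hsq c' := by
  obtain ⟨o⟩ : Nonempty (CostructuredArrow i c) := inferInstance
  refine (fillerObj_eq hp hsq (CostructuredArrow.mk (o.hom ≫ h))
    (hp.liftHom (u.obj o.left) _ ≫ eqToHom (fillerObj_eq_fillerObjAt hp hsq o).symm ≫
      hp.liftHom _ _) (hp.obj_liftObj _ _) ?_).symm
  simp [eqToHom_map]

noncomputable def fillerMap (hp : IsDiscreteOpfibration p) (hsq : i ⋙ v = u ⋙ p) {c c' : C}
    (h : c ⟶ c') : fillerObj hp hsq c ⟶ fillerObj hp hsq c' :=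
  hp.liftHom _ (eqToHom (obj_fillerObj hp hsq c) ≫ v.map h) ≫
    eqToHom (liftObj_fillerObj hp hsq h)

@[simp]
theorem map_fillerMap (hp : IsDiscreteOpfibration p) (hsq : i ⋙ v = u ⋙ p) {c c' : C}
    (h : c ⟶ c') :
    p.map (fillerMap hp hsq h) =
      eqToHom (obj_fillerObj hp hsq c) ≫ v.map h ≫ eqToHom (obj_fillerObj hp hsq c').symm := by
  simp [fillerMap, eqToHom_map]

noncomputable def filler (hp : IsDiscreteOpfibration p) (hsq : i ⋙ v = u ⋙ p) : C ⥤ E where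
  obj := fillerObj hp hsq
  map := fillerMap hp hsq
  map_id _ := by
    have := hp.faithful
    exact p.map_injective (by simp)
  map_comp _ _ := by
    have := hp.faithful
    exact p.map_injective (by simp)

theorem filler_comp (hp : IsDiscreteOpfibration p) (hsq : i ⋙ v = u ⋙ p) :
    filler hp hsq ⋙ p = v :=
  CategoryTheory.Functor.ext (obj_fillerObj hp hsq) (fun _ _ h => by simp [filler])

theorem comp_filler (hp : IsDiscreteOpfibration p) (hsq : i ⋙ v = u ⋙ p) :
    i ⋙ filler hp hsq = u := by
  have := hp.faithful
  refine Functor.ext_of_comp_faithful p (fun a => fillerObj_eq hp hsq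
    (CostructuredArrow.mk (𝟙 (i.obj a))) (𝟙 (u.obj a)) (Functor.congr_obj hsq a).symm
    (by simp)) ?_
  rw [Functor.assoc, filler_comp, hsq]

end Filler

end IsDiscreteOpfibration

theorem CategoryTheory.CategoryOfElements.isDiscreteOpfibration_π {B : Type*} [Category B]
    (G : B ⥤ Type*) : IsDiscreteOpfibration (CategoryOfElements.π G) := by
  intro e y f
  refine ⟨⟨⟨y, G.map f e.2⟩, ⟨f, rfl⟩⟩, ⟨rfl, Category.comp_id f⟩, ?_⟩
  rintro ⟨⟨y', x'⟩, g, hg⟩ ⟨h, hfac⟩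
  dsimp only at g hg
  obtain rfl : y = y' := h.symm
  obtain rfl : g = f := (Category.comp_id g).symm.trans hfac
  obtain rfl : G.map g e.2 = x' := hg
  rfl

namespace CategoryTheory.Functor

variable {A B : Type u} [Category.{u} A] [Category.{u} B] (F : A ⥤ B)

abbrev costructuredArrowComponents : B ⥤ Type u where
  obj b := ConnectedComponents (CostructuredArrow F b)
  map g := TypeCat.ofHom (CostructuredArrow.map g).mapConnectedComponents
  map_id _ := by
    ext ⟨o⟩
    exact congrArg ConnectedComponents.mk CostructuredArrow.map_id
  map_comp _ _ := by
    ext ⟨o⟩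
    exact congrArg ConnectedComponents.mk CostructuredArrow.map_comp

theorem costructuredArrowComponents_map_mk {b b' : B} (g : b ⟶ b')
    (o : CostructuredArrow F b) :
    F.costructuredArrowComponents.map g (ConnectedComponents.mk o) =
      ConnectedComponents.mk (CostructuredArrow.mk (o.hom ≫ g)) :=
  rfl

def toComponentsElements : A ⥤ F.costructuredArrowComponents.Elements where
  obj a := ⟨F.obj a, ConnectedComponents.mk (CostructuredArrow.mk (𝟙 (F.obj a)))⟩
  map {a a'} h := ⟨F.map h, by
    rw [costructuredArrowComponents_map_mk]
    exact Quotient.sound' (Zigzag.of_hom (CostructuredArrow.homMk h (by simp)))⟩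

theorem toComponentsElements_comp_π :
    F.toComponentsElements ⋙ CategoryOfElements.π _ = F :=
  rfl

def componentToCostructuredArrow {b : B} (x : ConnectedComponents (CostructuredArrow F b)) :
    x.Component ⥤ CostructuredArrow F.toComponentsElements
      (F.costructuredArrowComponents.elementsMk b x) where
  obj o := CostructuredArrow.mk (Y := o.obj.left) ⟨o.obj.hom, by
    change ConnectedComponents.mk (CostructuredArrow.mk (𝟙 _ ≫ o.obj.hom)) = x
    rw [Category.id_comp, ← CostructuredArrow.eq_mk]
    exact o.property⟩
  map m := CostructuredArrow.homMk m.hom.left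
    (CategoryOfElements.ext _ _ _ (CostructuredArrow.w m.hom))

theorem componentToCostructuredArrow_obj_surjective {b : B}
    (x : ConnectedComponents (CostructuredArrow F b)) :
    Function.Surjective (F.componentToCostructuredArrow x).obj := by
  intro P
  have hP : ConnectedComponents.mk (CostructuredArrow.mk P.hom.val) = x :=
    (congrArg (fun f => ConnectedComponents.mk (CostructuredArrow.mk f))
      (Category.id_comp P.hom.val).symm).trans P.hom.property
  exact ⟨⟨CostructuredArrow.mk P.hom.val, hP⟩, (CostructuredArrow.eq_mk P).symm⟩

instance initial_toComponentsElements : F.toComponentsElements.Initial where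
  out X := isConnected_of_surjective_obj _ (F.componentToCostructuredArrow_obj_surjective X.2)

end CategoryTheory.Functor

namespace CategoryTheory

def HasUniqueLiftingProperty {𝒞 : Type*} [Category 𝒞] {A C E B : 𝒞} (i : A ⟶ C) (p : E ⟶ B) :
    Prop :=
  ∀ (u : A ⟶ E) (v : C ⟶ B), i ≫ v = u ≫ p → ∃! d : C ⟶ E, i ≫ d = u ∧ d ≫ p = v

theorem HasUniqueLiftingProperty.existsUnique_iso {𝒞 : Type*} [Category 𝒞] {A B C C' : 𝒞}
    {i : A ⟶ C} {p : C ⟶ B} {i' : A ⟶ C'} {p' : C' ⟶ B} (h : i ≫ p = i' ≫ p')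
    (hip : HasUniqueLiftingProperty i p) (hip' : HasUniqueLiftingProperty i p')
    (hi'p : HasUniqueLiftingProperty i' p) (hi'p' : HasUniqueLiftingProperty i' p') :
    ∃! e : C ≅ C', i ≫ e.hom = i' ∧ e.hom ≫ p' = p := by
  obtain ⟨d, ⟨hd₁, hd₂⟩, hd⟩ := hip' i' p h
  obtain ⟨d', ⟨hd'₁, hd'₂⟩, -⟩ := hi'p i p' h.symm
  have hdd' : d ≫ d' = 𝟙 C := (hip i p rfl).unique
    ⟨by rw [reassoc_of% hd₁, hd'₁], by rw [Category.assoc, hd'₂, hd₂]⟩ ⟨by simp, by simp⟩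
  have hd'd : d' ≫ d = 𝟙 C' := (hi'p' i' p' rfl).unique
    ⟨by rw [reassoc_of% hd'₁, hd₁], by rw [Category.assoc, hd₂, hd'₂]⟩ ⟨by simp, by simp⟩
  exact ⟨⟨d, d', hdd', hd'd⟩, ⟨hd₁, hd₂⟩, fun e he => Iso.ext (hd e.hom he)⟩

theorem Cat.hasUniqueLiftingProperty_of_initial {A C E B : Cat} (i : A ⟶ C) (p : E ⟶ B)
    (hi : i.toFunctor.Initial) (hp : IsDiscreteOpfibration p.toFunctor) :
    HasUniqueLiftingProperty i p := by
  intro u v hsq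
  replace hsq : i.toFunctor ⋙ v.toFunctor = u.toFunctor ⋙ p.toFunctor :=
    congrArg Cat.Hom.toFunctor hsq
  refine ⟨(hp.filler hsq).toCatHom,
    ⟨Cat.ext (hp.comp_filler hsq), Cat.ext (hp.filler_comp hsq)⟩, fun d ⟨h₁, h₂⟩ => Cat.ext ?_⟩
  exact hp.functor_ext (fun _ => inferInstance)
    ((congrArg Cat.Hom.toFunctor h₁).trans (hp.comp_filler hsq).symm)
    ((congrArg Cat.Hom.toFunctor h₂).trans (hp.filler_comp hsq).symm)

end CategoryTheory

/-- The comprehensive factorization system: initial functors and discrete opfibrations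
form an orthogonal factorization system on `Cat`.  Every functor factors as an initial
functor followed by a discrete opfibration, uniquely up to unique isomorphism, and
initial functors are left orthogonal to discrete opfibrations (unique diagonal fillers). -/
theorem comprehensive_factorization :
    -- factorization
    (∀ {A B : Cat.{u, u}} (F : A ⟶ B), ∃ (C : Cat.{u, u}) (i : A ⟶ C) (p : C ⟶ B),
      Functor.Initial i.toFunctor ∧ IsDiscreteOpfibration p.toFunctor ∧ i ≫ p = F) ∧
    -- uniqueness of the factorization, up to unique isomorphism
    (∀ {A B : Cat.{u, u}} (F : A ⟶ B) (C C' : Cat.{u, u})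
      (i : A ⟶ C) (p : C ⟶ B) (i' : A ⟶ C') (p' : C' ⟶ B),
      Functor.Initial i.toFunctor → IsDiscreteOpfibration p.toFunctor → i ≫ p = F →
      Functor.Initial i'.toFunctor → IsDiscreteOpfibration p'.toFunctor → i' ≫ p' = F →
      ∃! e : C ≅ C', i ≫ e.hom = i' ∧ e.hom ≫ p' = p) ∧
    -- orthogonality: unique diagonal fillers
    (∀ {A C E B : Cat.{u, u}} (i : A ⟶ C) (p : E ⟶ B) (u : A ⟶ E) (v : C ⟶ B),
      Functor.Initial i.toFunctor → IsDiscreteOpfibration p.toFunctor → i ≫ v = u ≫ p →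
      ∃! d : C ⟶ E, i ≫ d = u ∧ d ≫ p = v) := by
  refine ⟨fun F => ?_, fun F C C' i p i' p' hi hp hF hi' hp' hF' => ?_,
    fun i p u v hi hp hsq => Cat.hasUniqueLiftingProperty_of_initial i p hi hp u v hsq⟩
  · exact ⟨Cat.of F.toFunctor.costructuredArrowComponents.Elements,
      F.toFunctor.toComponentsElements.toCatHom, (CategoryOfElements.π _).toCatHom,
      F.toFunctor.initial_toComponentsElements, CategoryOfElements.isDiscreteOpfibration_π _,
      Cat.ext F.toFunctor.toComponentsElements_comp_π⟩
  · exact HasUniqueLiftingProperty.existsUnique_iso (hF.trans hF'.symm)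
      (Cat.hasUniqueLiftingProperty_of_initial i p hi hp)
      (Cat.hasUniqueLiftingProperty_of_initial i p' hi hp')
      (Cat.hasUniqueLiftingProperty_of_initial i' p hi' hp)
      (Cat.hasUniqueLiftingProperty_of_initial i' p' hi' hp')
end

section
/- An initial functor which is also a discrete opfibration is an isomorphism of categories. -/
open CategoryTheory

universe v₁ v₂ u₁ u₂

/-- An initial functor which is also a discrete opfibration is an isomorphism of
categories. -/
theorem initial_discreteOpfibration_isIso
    {J : Type u₁} {K : Type u₂} [Category.{v₁} J] [Category.{v₂} K]
    (R : J ⥤ K) (hinit : R.Initial) (hdopf : IsDiscreteOpfibration R) :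
    ∃ S : K ⥤ J, R ⋙ S = 𝟭 J ∧ S ⋙ R = 𝟭 K := by
  classical
  have hP : ∀ (e : J) (y : K) (f : R.obj e ⟶ y),
      Lifts R e f (hdopf e y f).exists.choose :=
    fun e y f => (hdopf e y f).exists.choose_spec
  have hPu : ∀ (e : J) (y : K) (f : R.obj e ⟶ y) (p), Lifts R e f p →
      p = (hdopf e y f).exists.choose :=
    fun e y f p hp => (hdopf e y f).unique hp (hP e y f)
  have hL : ∀ (k : K) (X Y : CostructuredArrow R k) (φ : X ⟶ Y),
      ((hdopf X.left k X.hom).exists.choose).1 = ((hdopf Y.left k Y.hom).exists.choose).1 := by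
    intro k X Y φ
    obtain ⟨h, hh⟩ := hP Y.left k Y.hom
    have hlift : Lifts R X.left X.hom
        ⟨((hdopf Y.left k Y.hom).exists.choose).1,
          φ.left ≫ ((hdopf Y.left k Y.hom).exists.choose).2⟩ :=
      ⟨h, by rw [Functor.map_comp, Category.assoc, hh, CostructuredArrow.w φ]⟩
    exact congrArg Sigma.fst (hPu X.left k X.hom _ hlift).symm
  have hconst : ∀ (k : K) (X Y : CostructuredArrow R k),
      ((hdopf X.left k X.hom).exists.choose).1 = ((hdopf Y.left k Y.hom).exists.choose).1 := by
    intro k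
    haveI := hinit.out k
    exact constant_of_preserves_morphisms
      (fun (X : CostructuredArrow R k) => ((hdopf X.left k X.hom).exists.choose).1) (hL k)
  have Rinj : ∀ j₁ j₂ : J, R.obj j₁ = R.obj j₂ → j₁ = j₂ := by
    intro j₁ j₂ h
    have e1 : (hdopf j₁ (R.obj j₂) (eqToHom h)).exists.choose = ⟨j₁, 𝟙 j₁⟩ :=
      (hPu _ _ _ ⟨j₁, 𝟙 j₁⟩ ⟨h, by simp⟩).symm
    have e2 : (hdopf j₂ (R.obj j₂) (𝟙 (R.obj j₂))).exists.choose = ⟨j₂, 𝟙 j₂⟩ :=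
      (hPu _ _ _ ⟨j₂, 𝟙 j₂⟩ ⟨rfl, by simp⟩).symm
    have := hconst (R.obj j₂) (CostructuredArrow.mk (eqToHom h))
      (CostructuredArrow.mk (𝟙 (R.obj j₂)))
    simpa [e1, e2] using this
  have hsurj : ∀ k : K, ∃ j : J, R.obj j = k := by
    intro k
    haveI := hinit.out k
    obtain ⟨X⟩ := (IsConnected.is_nonempty : Nonempty (CostructuredArrow R k))
    obtain ⟨h, -⟩ := hP X.left k X.hom
    exact ⟨_, h⟩
  have hfull : ∀ (j₁ j₂ : J) (f : R.obj j₁ ⟶ R.obj j₂), ∃ u : j₁ ⟶ j₂, R.map u = f := by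
    intro j₁ j₂ f
    obtain ⟨h, hh⟩ := hP j₁ (R.obj j₂) f
    have e : ((hdopf j₁ (R.obj j₂) f).exists.choose).1 = j₂ := Rinj _ _ h
    refine ⟨((hdopf j₁ (R.obj j₂) f).exists.choose).2 ≫ eqToHom e, ?_⟩
    rw [Functor.map_comp, eqToHom_map]
    exact hh
  have hfaith : ∀ (j₁ j₂ : J) (u u' : j₁ ⟶ j₂), R.map u = R.map u' → u = u' := by
    intro j₁ j₂ u u' h
    have h1 : Lifts R j₁ (R.map u) ⟨j₂, u⟩ := ⟨rfl, by simp⟩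
    have h2 : Lifts R j₁ (R.map u) ⟨j₂, u'⟩ := ⟨rfl, by simp [h]⟩
    have := (hdopf j₁ (R.obj j₂) (R.map u)).unique h1 h2
    exact eq_of_heq (Sigma.mk.inj_iff.mp this).2
  have hSobj : ∀ k : K, R.obj (hsurj k).choose = k := fun k => (hsurj k).choose_spec
  have hSmap : ∀ {k k' : K} (g : k ⟶ k'),
      R.map (hfull _ _ (eqToHom (hSobj k) ≫ g ≫ eqToHom (hSobj k').symm)).choose =
        eqToHom (hSobj k) ≫ g ≫ eqToHom (hSobj k').symm :=
    fun g => (hfull _ _ _).choose_spec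
  refine ⟨{
    obj := fun k => (hsurj k).choose
    map := fun {k k'} g => (hfull _ _ (eqToHom (hSobj k) ≫ g ≫ eqToHom (hSobj k').symm)).choose
    map_id := fun k => hfaith _ _ _ _ (by rw [hSmap]; simp)
    map_comp := fun {a b c} g g' => hfaith _ _ _ _
      (by rw [hSmap, Functor.map_comp, hSmap, hSmap]; simp) }, ?_, ?_⟩
  · refine CategoryTheory.Functor.ext (fun j => Rinj _ _ (by simp only [Functor.comp_obj, Functor.id_obj]; rw [hSobj])) ?_
    intro j₁ j₂ u
    apply hfaith
    simp only [Functor.comp_map, Functor.id_map, Functor.map_comp, eqToHom_map, hSmap]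
  · refine CategoryTheory.Functor.ext (fun k => hSobj k) ?_
    intro k₁ k₂ g
    simp only [Functor.comp_map, Functor.id_map, hSmap]
end

section
/- Let X be the arrow category 𝟚 = (0 → 1). The unique diagram morphism from the constant diagram at 1 with shape the terminal category to the diagram constant at 1 with shape 𝟙 + 𝟙 induces a bijection on lifts against every representable discrete opfibration (coslice projection x/X → X), but does not induce a bijection on lifts against the discrete opfibration given by the coproduct (1/X) + (1/X) → X. -/
/-!
Over the thin category `𝟚`, the coslice `x/𝟚` has at most one object over `1` and is thin, so a
lift of the point at `1` is forced, and it maps to every lift of the two points. In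
`(1/𝟚) + (1/𝟚)` the two points can be lifted into different summands; a lift of the single point
lies in one summand and has no morphism into the other, so there is no preimage.
-/

open CategoryTheory

/-- The induced function from lifts of `D` to lifts of `E` along a fixed functor
`π : Eb ⥤ X` determined by a `Diag←(X)`-morphism `(R, ρ) : (J, D) ⟶ (K, E)` is a
bijection: every lift `Ebar` of `E` has a unique preimage lift `Db` of `D`, the
preimage relation being witnessed by a natural transformation `R ⋙ Db ⟶ Ebar`
lying over `ρ`. -/
def InducesLiftBijection {X : Type} [Category X] {J K : Type} [Category J] [Category K]
    (D : J ⥤ X) (E : K ⥤ X) (R : K ⥤ J) (ρ : R ⋙ D ⟶ E)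
    {Eb : Type} [Category Eb] (π : Eb ⥤ X) : Prop :=
  ∀ (Ebar : K ⥤ Eb) (hEbar : Ebar ⋙ π = E),
    ∃! Db : { F : J ⥤ Eb // F ⋙ π = D },
      ∃ ρb : R ⋙ Db.1 ⟶ Ebar,
        ∀ k : K, π.map (ρb.app k) =
          eqToHom (Functor.congr_obj Db.2 (R.obj k)) ≫ ρ.app k ≫
            eqToHom (Functor.congr_obj hEbar k).symm

namespace CategoryTheory.Under

variable {T : Type*} [Category T] [Quiver.IsThin T] {x : T}

lemma eq_of_right_eq {A B : Under x} (h : A.right = B.right) : A = B := by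
  obtain ⟨⟨⟩, _, _⟩ := A
  obtain ⟨⟨⟩, _, _⟩ := B
  subst h
  congr 1
  exact Subsingleton.elim _ _

instance isThin : Quiver.IsThin (Under x) :=
  fun _ _ => ⟨fun _ _ => Under.UnderMorphism.ext (Subsingleton.elim _ _)⟩

end CategoryTheory.Under

section ConstPointToConst

variable {X : Type} [Category X] [Quiver.IsThin X]

theorem inducesLiftBijection_const_of_unique_obj_over {K : Type} [Category K] (d : X)
    {Eb : Type} [Category Eb] [Quiver.IsThin Eb] (π : Eb ⥤ X) (e : Eb) (he : π.obj e = d)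
    (hfiber : ∀ e' : Eb, π.obj e' = d → e' = e) :
    InducesLiftBijection
      ((Functor.const (Discrete PUnit.{1})).obj d) ((Functor.const K).obj d)
      ((Functor.const K).obj (⟨PUnit.unit⟩ : Discrete PUnit.{1}))
      ⟨fun _ => 𝟙 _, fun _ _ _ => Subsingleton.elim _ _⟩ π := by
  intro Ebar hEbar
  have hconst : (Functor.const (Discrete PUnit.{1})).obj e ⋙ π =
      (Functor.const (Discrete PUnit.{1})).obj d :=
    CategoryTheory.Functor.ext (fun _ => he) (fun _ _ _ => Subsingleton.elim _ _)
  refine ⟨⟨_, hconst⟩, ⟨⟨fun k => eqToHom ?_, fun _ _ _ => Subsingleton.elim _ _⟩,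
    fun _ => Subsingleton.elim _ _⟩, ?_⟩
  · exact (hfiber _ (Functor.congr_obj hEbar k)).symm
  · rintro ⟨F, hF⟩ -
    exact Subtype.ext <| CategoryTheory.Functor.ext (fun j => hfiber _ (Functor.congr_obj hF j))
      (fun _ _ _ => Subsingleton.elim _ _)

theorem not_inducesLiftBijection_sum' {E₁ E₂ : Type} [Category E₁] [Category E₂]
    (π₁ : E₁ ⥤ X) (π₂ : E₂ ⥤ X) {d : X} (e₁ : E₁) (e₂ : E₂)
    (h₁ : π₁.obj e₁ = d) (h₂ : π₂.obj e₂ = d) :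
    ¬ InducesLiftBijection
      ((Functor.const (Discrete PUnit.{1})).obj d)
      ((Functor.const (Discrete PUnit.{1} ⊕ Discrete PUnit.{1})).obj d)
      ((Functor.const (Discrete PUnit.{1} ⊕ Discrete PUnit.{1})).obj
        (⟨PUnit.unit⟩ : Discrete PUnit.{1}))
      ⟨fun _ => 𝟙 _, fun _ _ _ => Subsingleton.elim _ _⟩ (Functor.sum' π₁ π₂) := by
  intro h
  let Ebar := ((Functor.const (Discrete PUnit.{1})).obj e₁).sum
    ((Functor.const (Discrete PUnit.{1})).obj e₂)
  have hEbar : Ebar ⋙ Functor.sum' π₁ π₂ =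
      (Functor.const (Discrete PUnit.{1} ⊕ Discrete PUnit.{1})).obj d := by
    refine CategoryTheory.Functor.ext (fun k => ?_) (fun _ _ _ => Subsingleton.elim _ _)
    rcases k with ⟨⟨⟩⟩ | ⟨⟨⟩⟩
    exacts [h₁, h₂]
  obtain ⟨⟨F, _⟩, ⟨ρb, -⟩, -⟩ := h Ebar hEbar
  have toInl : F.obj ⟨PUnit.unit⟩ ⟶ Sum.inl e₁ := ρb.app (Sum.inl ⟨PUnit.unit⟩)
  have toInr : F.obj ⟨PUnit.unit⟩ ⟶ Sum.inr e₂ := ρb.app (Sum.inr ⟨PUnit.unit⟩)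
  rcases hF : F.obj ⟨PUnit.unit⟩ with A | A <;> rw [hF] at toInl toInr
  · exact hom_inl_inr_false (f := toInr)
  · exact hom_inr_inl_false (f := toInl)

end ConstPointToConst

/-- Let `X` be the arrow category `𝟚 = (0 ⟶ 1)` (the preorder `Fin 2`).  The unique
morphism in `Diag←(X)` from the diagram constant at `1` with shape the terminal
category to the diagram constant at `1` with shape `𝟙 + 𝟙` (determined by the unique
functor `𝟙 + 𝟙 ⥤ 𝟙`) induces a bijection on lifts against every representable discrete
opfibration (coslice projection `x/X ⥤ X`), but does not induce a bijection on lifts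
against the discrete opfibration `(1/X) + (1/X) ⥤ X`. -/
theorem representable_lifts_do_not_suffice :
    (∀ x : Fin 2,
      InducesLiftBijection
        ((Functor.const (Discrete PUnit.{1})).obj (1 : Fin 2))
        ((Functor.const (Discrete PUnit.{1} ⊕ Discrete PUnit.{1})).obj (1 : Fin 2))
        ((Functor.const (Discrete PUnit.{1} ⊕ Discrete PUnit.{1})).obj
          (⟨PUnit.unit⟩ : Discrete PUnit.{1}))
        ⟨fun _ => 𝟙 _, fun _ _ _ => Subsingleton.elim _ _⟩
        (Under.forget x)) ∧
    ¬ InducesLiftBijection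
        ((Functor.const (Discrete PUnit.{1})).obj (1 : Fin 2))
        ((Functor.const (Discrete PUnit.{1} ⊕ Discrete PUnit.{1})).obj (1 : Fin 2))
        ((Functor.const (Discrete PUnit.{1} ⊕ Discrete PUnit.{1})).obj
          (⟨PUnit.unit⟩ : Discrete PUnit.{1}))
        ⟨fun _ => 𝟙 _, fun _ _ _ => Subsingleton.elim _ _⟩
        (Functor.sum' (Under.forget (1 : Fin 2)) (Under.forget (1 : Fin 2))) := by
  refine ⟨fun x => ?_, ?_⟩
  · have hx : x ≤ 1 := Fin.le_last x
    exact inducesLiftBijection_const_of_unique_obj_over 1 (Under.forget x)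
      (Under.mk (homOfLE hx)) rfl fun _ he => Under.eq_of_right_eq he
  · exact not_inducesLiftBijection_sum' _ _ (Under.mk (𝟙 1)) (Under.mk (𝟙 1)) rfl rfl
end

section
/- In any 2-category K, every left adjoint 1-morphism ℓ : X → Y is initial, i.e., for every commutative square ℓ·g = f·p with p : E → B a discrete opfibration in K, there exists a unique 1-morphism k : Y → E with ℓ·k = f and k·p = g. -/
open CategoryTheory

universe w v u

variable {K : Type u} [Bicategory.{w, v} K] [Bicategory.Strict K]

/-- A 1-morphism `p : E ⟶ B` in a 2-category is a discrete opfibration if every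
2-morphism `α : f ⟶ g : C ⟶ B` together with a lift `fb` of `f` along `p` admits a
unique lift: a 1-morphism `gb` and a 2-morphism `ab : fb ⟶ gb` lying over `α`. -/
def IsDiscreteOpfibration2 {E B : K} (p : E ⟶ B) : Prop :=
  ∀ {C : K} {f g : C ⟶ B} (α : f ⟶ g) (fb : C ⟶ E) (hf : fb ≫ p = f),
    ∃! s : Σ gb : C ⟶ E, fb ⟶ gb,
      ∃ h : s.1 ≫ p = g,
        Bicategory.whiskerRight s.2 p = eqToHom hf ≫ α ≫ eqToHom h.symm

/-- Whiskering on the right with equal 1-morphisms, up to `eqToHom`. -/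
theorem whiskerRight_congr_arg {a b c : K} {f g : a ⟶ b} (α : f ⟶ g) {h h' : b ⟶ c}
    (e : h = h') :
    Bicategory.whiskerRight α h =
      eqToHom (by rw [e]) ≫ Bicategory.whiskerRight α h' ≫ eqToHom (by rw [e]) := by
  subst e; simp

/-- The triangle identity in `eqToHom` form, in a strict bicategory. -/
theorem strict_left_triangle {X Y : K} (ℓ : X ⟶ Y) (r : Y ⟶ X)
    (adj : Bicategory.Adjunction ℓ r) :
    Bicategory.whiskerRight adj.unit ℓ ≫ eqToHom (Category.assoc ℓ r ℓ) ≫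
      Bicategory.whiskerLeft ℓ adj.counit =
      eqToHom (by simp) := by
  have h : Bicategory.whiskerRight adj.unit ℓ ≫ (Bicategory.associator ℓ r ℓ).hom ≫
      Bicategory.whiskerLeft ℓ adj.counit =
      (Bicategory.leftUnitor ℓ).hom ≫ (Bicategory.rightUnitor ℓ).inv := by
    rw [← adj.left_triangle]
    dsimp [Bicategory.leftZigzag]
    bicategory
  rw [Bicategory.Strict.associator_eqToIso, Bicategory.Strict.leftUnitor_eqToIso,
    Bicategory.Strict.rightUnitor_eqToIso] at h
  simpa using h

/-- In any 2-category, every left adjoint 1-morphism is initial: it is left orthogonal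
to all discrete opfibrations. -/
theorem leftAdjoint_initial_2cat {X Y E B : K} (ℓ : X ⟶ Y) (r : Y ⟶ X)
    (adj : Bicategory.Adjunction ℓ r) (p : E ⟶ B) (hp : IsDiscreteOpfibration2 p)
    (f : X ⟶ E) (g : Y ⟶ B) (hsq : ℓ ≫ g = f ≫ p) :
    ∃! k : Y ⟶ E, ℓ ≫ k = f ∧ k ≫ p = g := by
  have tri := strict_left_triangle ℓ r adj
  set η := adj.unit with hη
  set ε := adj.counit with hε
  have hf1 : (r ≫ f) ≫ p = (r ≫ ℓ) ≫ g := by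
    rw [Category.assoc, ← hsq, Category.assoc]
  -- lift ε ▷ g along p, starting at r ≫ f
  obtain ⟨⟨k, κ⟩, ⟨hk, hκ⟩, huniq⟩ :=
    hp (Bicategory.whiskerRight ε g) (r ≫ f) hf1
  dsimp only at hk hκ huniq
  have hg : k ≫ p = g := hk.trans (Category.id_comp g)
  -- key lemma: if ℓ ≫ k' = f and k' ≫ p = g then k' = k
  have main : ∀ k' : Y ⟶ E, ℓ ≫ k' = f → k' ≫ p = g → k' = k := by
    intro k' h1 h2
    have e1 : r ≫ f = (r ≫ ℓ) ≫ k' := by rw [Category.assoc, h1]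
    have hk' : k' ≫ p = 𝟙 Y ≫ g := by rw [h2, Category.id_comp]
    have cond : ∃ h : k' ≫ p = 𝟙 Y ≫ g,
        Bicategory.whiskerRight
          (eqToHom e1 ≫ Bicategory.whiskerRight ε k' ≫ eqToHom (Category.id_comp k')) p =
          eqToHom hf1 ≫ Bicategory.whiskerRight ε g ≫ eqToHom hk'.symm := by
      refine ⟨hk', ?_⟩
      rw [Bicategory.comp_whiskerRight, Bicategory.comp_whiskerRight,
        Bicategory.eqToHom_whiskerRight, Bicategory.eqToHom_whiskerRight,
        Bicategory.whiskerRight_comp_symm ε k' p, whiskerRight_congr_arg ε h2]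
      simp [Bicategory.Strict.associator_eqToIso]
    have := huniq ⟨k', eqToHom e1 ≫ Bicategory.whiskerRight ε k' ≫
      eqToHom (Category.id_comp k')⟩ cond
    exact congrArg Sigma.fst this
  -- show ℓ ≫ k = f using uniqueness of lifts of the identity 2-cell
  have hlk : ℓ ≫ k = f := by
    obtain ⟨s₀, -, huniq₀⟩ := hp (𝟙 (f ≫ p)) f rfl
    have hA : (⟨f, 𝟙 f⟩ : Σ gb : X ⟶ E, f ⟶ gb) = s₀ :=
      huniq₀ ⟨f, 𝟙 f⟩ ⟨rfl, by simp⟩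
    have hlkp : (ℓ ≫ k) ≫ p = f ≫ p := by rw [Category.assoc, hg, hsq]
    have tri_g : Bicategory.whiskerRight (Bicategory.whiskerRight η ℓ ≫
        eqToHom (Category.assoc ℓ r ℓ) ≫ Bicategory.whiskerLeft ℓ ε) g =
        Bicategory.whiskerRight (eqToHom (by simp : 𝟙 X ≫ ℓ = ℓ ≫ 𝟙 Y)) g := by
      rw [tri]
    rw [Bicategory.comp_whiskerRight, Bicategory.comp_whiskerRight,
      Bicategory.eqToHom_whiskerRight] at tri_g
    have hB : (⟨ℓ ≫ k,
        eqToHom (Category.id_comp f).symm ≫ Bicategory.whiskerRight η f ≫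
          eqToHom (Category.assoc ℓ r f) ≫ Bicategory.whiskerLeft ℓ κ⟩ :
        Σ gb : X ⟶ E, f ⟶ gb) = s₀ := by
      refine huniq₀ _ ⟨hlkp, ?_⟩
      dsimp only
      rw [Bicategory.comp_whiskerRight, Bicategory.comp_whiskerRight,
        Bicategory.comp_whiskerRight, Bicategory.eqToHom_whiskerRight,
        Bicategory.eqToHom_whiskerRight,
        Bicategory.whiskerRight_comp_symm η f p, whiskerRight_congr_arg η hsq.symm,
        Bicategory.whiskerRight_comp η ℓ g,
        Bicategory.whisker_assoc ℓ κ p, hκ,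
        Bicategory.whiskerLeft_comp, Bicategory.whiskerLeft_comp,
        Bicategory.whiskerLeft_eqToHom, Bicategory.whiskerLeft_eqToHom,
        Bicategory.whisker_assoc_symm ℓ ε g]
      simp only [Bicategory.Strict.associator_eqToIso, eqToIso.hom, eqToIso.inv,
        Category.assoc, eqToHom_trans, eqToHom_trans_assoc, eqToHom_refl,
        Category.id_comp, Category.comp_id]
      rw [reassoc_of% tri_g]
      simp
    have := hA.trans hB.symm
    exact (congrArg Sigma.fst this).symm
  exact ⟨k, ⟨hlk, hg⟩, fun k' ⟨h1, h2⟩ => main k' h1 h2⟩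
end
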